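/- arXiv:1806.04384 — 8 statements merged into one kernel-verified Lean document; each statement's English description precedes it below -/
import Mathlib

section
/- There exists a constant C > 0 such that for all ℓ ∈ (0, 2·arsinh(1)] one has | 8π · ∫_{−X(ℓ)}^{X(ℓ)} ρ_ℓ(s)^{−2} ds − ( 32π⁵/ℓ³ − 16π⁴/3 ) | ≤ C·ℓ². -/
open Real MeasureTheory

/-- Half-width (in the coordinate `s`) of the standard hyperbolic collar around a simple
closed geodesic of length `ℓ`. -/
noncomputable def collarX (ℓ : ℝ) : ℝ :=
  (2 * Real.pi / ℓ) * (Real.pi / 2 - Real.arctan (Real.sinh (ℓ / 2)))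

/-- Conformal factor of the standard hyperbolic collar metric `ρ_ℓ(s)²(ds² + dθ²)`. -/
noncomputable def collarRho (ℓ s : ℝ) : ℝ :=
  ℓ / (2 * Real.pi * Real.cos (ℓ * s / (2 * Real.pi)))

lemma collar_arctan_lb (x : ℝ) (hx : 0 ≤ x) : x - x^3/3 ≤ Real.arctan x := by
  have hmono : Monotone (fun y : ℝ => Real.arctan y - (y - y^3/3)) := by
    apply monotone_of_deriv_nonneg
    · exact Real.differentiable_arctan.sub (by fun_prop)
    · intro y
      have h : HasDerivAt (fun y : ℝ => Real.arctan y - (y - y^3/3))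
          (1 / (1 + y^2) - (1 - 3*y^2/3)) y :=
        (Real.hasDerivAt_arctan y).sub
          ((hasDerivAt_id y).sub ((hasDerivAt_pow 3 y).div_const 3))
      rw [h.deriv]
      have h1 : (0:ℝ) < 1 + y^2 := by positivity
      have h2 : (1 - 3*y^2/3) * (1 + y^2) ≤ 1 := by nlinarith [sq_nonneg y, sq_nonneg (y^2)]
      nlinarith [((le_div_iff₀ h1).mpr h2 : (1 - 3*y^2/3) ≤ 1 / (1+y^2))]
  have := hmono hx
  simpa using this

lemma collar_arctan_ub (x : ℝ) (hx : 0 ≤ x) : Real.arctan x ≤ x - x^3/3 + x^5/5 := by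
  have hmono : Monotone (fun y : ℝ => (y - y^3/3 + y^5/5) - Real.arctan y) := by
    apply monotone_of_deriv_nonneg
    · exact (by fun_prop : Differentiable ℝ fun y : ℝ => y - y^3/3 + y^5/5).sub
        Real.differentiable_arctan
    · intro y
      have h : HasDerivAt (fun y : ℝ => (y - y^3/3 + y^5/5) - Real.arctan y)
          ((1 - 3*y^2/3 + 5*y^4/5) - 1 / (1 + y^2)) y :=
        (((hasDerivAt_id y).sub ((hasDerivAt_pow 3 y).div_const 3)).add
          ((hasDerivAt_pow 5 y).div_const 5)).sub (Real.hasDerivAt_arctan y)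
      rw [h.deriv]
      have h1 : (0:ℝ) < 1 + y^2 := by positivity
      have h2 : (1:ℝ) ≤ (1 - 3*y^2/3 + 5*y^4/5) * (1 + y^2) := by
        nlinarith [pow_nonneg (sq_nonneg y) 3, sq_nonneg (y^3)]
      nlinarith [((div_le_iff₀ h1).mpr h2 : 1 / (1+y^2) ≤ (1 - 3*y^2/3 + 5*y^4/5))]
  have := hmono hx
  simpa using this

lemma collar_sinh_bounds {t : ℝ} (h0 : 0 ≤ t) (h1 : t ≤ 1) :
    t + t^3/6 ≤ Real.sinh t ∧ Real.sinh t ≤ t + t^3/6 + t^5/20 := by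
  have habs : |t| ≤ 1 := by rw [abs_of_nonneg h0]; exact h1
  have habs' : |(-t)| ≤ 1 := by rwa [abs_neg]
  have hb1 := Real.exp_bound habs (by norm_num : 0 < 6)
  have hb2 := Real.exp_bound habs' (by norm_num : 0 < 6)
  have hsum1 : ∑ m ∈ Finset.range 6, t ^ m / m.factorial
      = 1 + t + t^2/2 + t^3/6 + t^4/24 + t^5/120 := by
    simp [Finset.sum_range_succ, Nat.factorial]
  have hsum2 : ∑ m ∈ Finset.range 6, (-t) ^ m / m.factorial
      = 1 - t + t^2/2 - t^3/6 + t^4/24 - t^5/120 := by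
    simp [Finset.sum_range_succ, Nat.factorial]
    ring
  rw [hsum1] at hb1
  rw [hsum2] at hb2
  rw [abs_neg, abs_of_nonneg h0] at hb2
  rw [abs_of_nonneg h0] at hb1
  have hfac : ((Nat.succ 6 : ℕ) : ℝ) / ((Nat.factorial 6 : ℕ) * (6:ℕ)) = 7/4320 := by
    norm_num [Nat.factorial]
  rw [hfac] at hb1 hb2
  rw [abs_le] at hb1 hb2
  have hsinh : Real.sinh t = (Real.exp t - Real.exp (-t)) / 2 := Real.sinh_eq t
  have ht6 : t^6 ≤ t^5 := by nlinarith [pow_nonneg h0 5]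
  constructor <;> nlinarith [pow_nonneg h0 5, pow_nonneg h0 6]

set_option maxHeartbeats 1000000 in
lemma collar_core {t S : ℝ} (h0 : 0 < t) (h1 : t ≤ 1)
    (hS1 : t + t^3/6 ≤ S) (hS2 : S ≤ t + t^3/6 + t^5/20) :
    |Real.arctan S - S / (1 + S ^ 2) - 2/3 * t^3| ≤ 4 * t^5 := by
  have ht2 : t^2 ≤ 1 := by nlinarith
  have ht3 : t^3 ≤ t := by nlinarith
  have ht5 : t^5 ≤ t := by nlinarith
  have ht7 : t^7 ≤ t^5 := by nlinarith [pow_nonneg h0.le 5]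
  have htS : t ≤ S := by nlinarith [pow_nonneg h0.le 3]
  have hS0 : 0 ≤ S := h0.le.trans htS
  have hSt : S ≤ 13/10 * t := by nlinarith
  have he : S - t ≤ t^3/4 := by nlinarith
  have h2 : S^2 ≤ (13/10*t)^2 := by nlinarith
  have h5 : S^5 ≤ (13/10*t)^5 := pow_le_pow_left₀ hS0 hSt 5
  have h3t : t^3 ≤ S^3 := pow_le_pow_left₀ h0.le htS 3
  have hquad : S^2 + S*t + t^2 ≤ 6*t^2 := by nlinarith [mul_le_mul_of_nonneg_right hSt h0.le]
  have hcube : S^3 - t^3 ≤ 2*t^5 := by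
    nlinarith [mul_le_mul he hquad (by positivity) (by positivity : (0:ℝ) ≤ t^3/4)]
  have hU : (S - S^3/3 + S^5/5)*(1+S^2) - S - (2/3)*t^3*(1+S^2) ≤ 4*t^5 := by
    nlinarith [pow_nonneg hS0 5, mul_nonneg (pow_nonneg h0.le 3) (sq_nonneg S),
      mul_nonneg (pow_nonneg hS0 5) (sq_nonneg S),
      mul_le_mul_of_nonneg_left h2 (pow_nonneg hS0 5)]
  have hL : -(4*t^5) ≤ (S - S^3/3)*(1+S^2) - S - (2/3)*t^3*(1+S^2) := by
    nlinarith [mul_le_mul_of_nonneg_left h2 (pow_nonneg h0.le 3)]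
  have hden : (0:ℝ) < 1 + S^2 := by positivity
  have ha1 := collar_arctan_lb S hS0
  have ha2 := collar_arctan_ub S hS0
  set A := Real.arctan S with hAdef
  have hdiv : S / (1 + S^2) * (1 + S^2) = S := div_mul_cancel₀ _ hden.ne'
  have hkey : (A - S / (1 + S^2) - 2/3 * t^3) * (1+S^2)
      = A * (1+S^2) - S - 2/3*t^3*(1+S^2) := by linear_combination -hdiv
  have hNU : A * (1+S^2) - S - 2/3*t^3*(1+S^2) ≤ 4*t^5 := by
    have h := mul_le_mul_of_nonneg_right ha2 hden.le
    linarith [hU, h]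
  have hNL : -(4*t^5) ≤ A * (1+S^2) - S - 2/3*t^3*(1+S^2) := by
    have h := mul_le_mul_of_nonneg_right ha1 hden.le
    linarith [hL, h]
  have hNabs : |A * (1+S^2) - S - 2/3*t^3*(1+S^2)| ≤ 4*t^5 := abs_le.mpr ⟨hNL, hNU⟩
  have hone : (1:ℝ) ≤ 1 + S^2 := by nlinarith [sq_nonneg S]
  calc |A - S / (1 + S^2) - 2/3 * t^3|
      = |A - S / (1 + S^2) - 2/3 * t^3| * 1 := by ring
    _ ≤ |A - S / (1 + S^2) - 2/3 * t^3| * (1 + S^2) := by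
        exact mul_le_mul_of_nonneg_left hone (abs_nonneg _)
    _ = |(A - S / (1 + S^2) - 2/3 * t^3) * (1 + S^2)| := by
        rw [abs_mul, abs_of_pos hden]
    _ = |A * (1+S^2) - S - 2/3*t^3*(1+S^2)| := by rw [hkey]
    _ ≤ 4*t^5 := hNabs

/-- Asymptotic expansion of the squared L²-norm of dz² on the standard collar:
`|8π ∫ ρ_ℓ⁻² − (32π⁵/ℓ³ − 16π⁴/3)| ≤ C ℓ²` for all `ℓ ∈ (0, 2 arsinh 1]`. -/
theorem collar_dz2_L2_expansion :
    ∃ C : ℝ, 0 < C ∧ ∀ ℓ : ℝ, ℓ ∈ Set.Ioc 0 (2 * Real.arsinh 1) →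
      |8 * Real.pi * (∫ s in (-collarX ℓ)..(collarX ℓ), (collarRho ℓ s ^ 2)⁻¹) -
          (32 * Real.pi ^ 5 / ℓ ^ 3 - 16 * Real.pi ^ 4 / 3)| ≤ C * ℓ ^ 2 := by
  have hπ := Real.pi_pos
  refine ⟨8 * Real.pi ^ 4, by positivity, ?_⟩
  rintro ℓ ⟨hl0, hl2⟩
  have hl0' : ℓ ≠ 0 := hl0.ne'
  have ht0 : 0 < ℓ / 2 := by linarith
  have hsinh1 : (1:ℝ) ≤ Real.sinh 1 := by
    have h := (collar_sinh_bounds (by norm_num : (0:ℝ) ≤ 1) le_rfl).1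
    norm_num at h
    linarith
  have harsinh : Real.arsinh 1 ≤ 1 := by
    calc Real.arsinh 1 ≤ Real.arsinh (Real.sinh 1) := Real.arsinh_le_arsinh.mpr hsinh1
    _ = 1 := Real.arsinh_sinh 1
  have ht1 : ℓ / 2 ≤ 1 := by linarith
  set t : ℝ := ℓ / 2 with htdef
  set S : ℝ := Real.sinh t with hSdef
  obtain ⟨hS1, hS2⟩ := collar_sinh_bounds ht0.le ht1
  have hS0 : 0 ≤ S := by nlinarith [pow_nonneg ht0.le 3, pow_nonneg ht0.le 5]
  have hden : (0:ℝ) < 1 + S ^ 2 := by positivity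
  have hc : ℓ / (2 * Real.pi) ≠ 0 := div_ne_zero hl0' (by positivity)
  -- rewrite the integrand
  have hrw : ∀ s : ℝ, ((collarRho ℓ s) ^ 2)⁻¹
      = (2 * Real.pi / ℓ) ^ 2 * Real.cos (ℓ / (2 * Real.pi) * s) ^ 2 := by
    intro s
    unfold collarRho
    have harg : ℓ * s / (2 * Real.pi) = ℓ / (2 * Real.pi) * s := by ring
    rw [harg]
    rcases eq_or_ne (Real.cos (ℓ / (2 * Real.pi) * s)) 0 with h | h
    · rw [h]; simp
    · field_simp
  have h1 : (∫ s in (-collarX ℓ)..(collarX ℓ), ((collarRho ℓ s) ^ 2)⁻¹)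
      = (2 * Real.pi / ℓ) ^ 2
        * ∫ s in (-collarX ℓ)..(collarX ℓ), Real.cos (ℓ / (2 * Real.pi) * s) ^ 2 := by
    rw [← intervalIntegral.integral_const_mul]
    exact intervalIntegral.integral_congr (fun s _ => hrw s)
  have h2 := intervalIntegral.integral_comp_mul_left (a := -collarX ℓ) (b := collarX ℓ)
      (fun u => Real.cos u ^ 2) hc
  have hx : ℓ / (2 * Real.pi) * collarX ℓ = Real.pi / 2 - Real.arctan S := by
    rw [collarX, hSdef, htdef]
    field_simp
  have hxneg : ℓ / (2 * Real.pi) * (-collarX ℓ) = -(Real.pi / 2 - Real.arctan S) := by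
    rw [mul_neg, hx]
  rw [hxneg, hx, integral_cos_sq] at h2
  have hsc : Real.cos (Real.pi / 2 - Real.arctan S) * Real.sin (Real.pi / 2 - Real.arctan S)
      = S / (1 + S ^ 2) := by
    rw [Real.cos_pi_div_two_sub, Real.sin_pi_div_two_sub, Real.sin_arctan, Real.cos_arctan]
    rw [div_mul_div_comm, mul_one, Real.mul_self_sqrt (by positivity)]
  have hval : (Real.cos (Real.pi / 2 - Real.arctan S) * Real.sin (Real.pi / 2 - Real.arctan S)
        - Real.cos (-(Real.pi / 2 - Real.arctan S)) * Real.sin (-(Real.pi / 2 - Real.arctan S))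
        + (Real.pi / 2 - Real.arctan S) - -(Real.pi / 2 - Real.arctan S)) / 2
      = (Real.pi / 2 - Real.arctan S) + S / (1 + S ^ 2) := by
    rw [Real.cos_neg, Real.sin_neg]
    rw [show Real.cos (Real.pi / 2 - Real.arctan S) * -Real.sin (Real.pi / 2 - Real.arctan S)
        = -(Real.cos (Real.pi / 2 - Real.arctan S) * Real.sin (Real.pi / 2 - Real.arctan S))
      by ring, hsc]
    ring
  rw [hval, smul_eq_mul] at h2
  have hI : 8 * Real.pi * (∫ s in (-collarX ℓ)..(collarX ℓ), (collarRho ℓ s ^ 2)⁻¹)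
      = 64 * Real.pi ^ 4 / ℓ ^ 3
        * ((Real.pi / 2 - Real.arctan S) + S / (1 + S ^ 2)) := by
    rw [h1, h2]
    rw [show (ℓ / (2 * Real.pi))⁻¹ = 2 * Real.pi / ℓ by rw [inv_div]]
    field_simp
    ring
  have hid : 8 * Real.pi * (∫ s in (-collarX ℓ)..(collarX ℓ), (collarRho ℓ s ^ 2)⁻¹)
        - (32 * Real.pi ^ 5 / ℓ ^ 3 - 16 * Real.pi ^ 4 / 3)
      = -(64 * Real.pi ^ 4 / ℓ ^ 3)
        * (Real.arctan S - S / (1 + S ^ 2) - 2 / 3 * t ^ 3) := by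
    rw [hI, htdef]
    field_simp
    ring
  rw [hid, abs_mul, abs_neg, abs_of_pos (by positivity : (0:ℝ) < 64 * Real.pi ^ 4 / ℓ ^ 3)]
  have hcore := collar_core ht0 ht1 hS1 hS2
  calc 64 * Real.pi ^ 4 / ℓ ^ 3 * |Real.arctan S - S / (1 + S ^ 2) - 2 / 3 * t ^ 3|
      ≤ 64 * Real.pi ^ 4 / ℓ ^ 3 * (4 * t ^ 5) := by
        exact mul_le_mul_of_nonneg_left hcore (by positivity)
    _ = 8 * Real.pi ^ 4 * ℓ ^ 2 := by
        rw [htdef]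
        field_simp
        ring
end

section
/- For every L̄ > 0 there exists a constant c₁ > 0 such that for all ℓ ∈ (0, L̄] one has 8π · ∫_{−X(ℓ)}^{X(ℓ)} ρ_ℓ(s)^{−2} ds ≥ c₁. -/
open Real MeasureTheory

/-!
Since `ρ_ℓ(s)⁻² = (2π/ℓ)² cos²(ℓs/2π)`, the substitution `u = ℓs/2π` turns the integral into
`(2π/ℓ)³ ∫_{-α}^{α} cos² u du = (2π/ℓ)³ (α + sin α cos α)`, where `α = ℓX(ℓ)/2π ∈ (0, π/2)`.
This is at least `(2π/ℓ)³ α`, and both factors decrease in `ℓ`, so the value at `ℓ = L̄`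
bounds it from below.
-/

/-- The half-width `ℓX(ℓ)/2π` of the collar in the angle variable `u = ℓs/2π`. -/
noncomputable def collarAngle (ℓ : ℝ) : ℝ :=
  π / 2 - arctan (sinh (ℓ / 2))

lemma collarX_eq (ℓ : ℝ) : collarX ℓ = 2 * π / ℓ * collarAngle ℓ := rfl

lemma collarAngle_pos (ℓ : ℝ) : 0 < collarAngle ℓ :=
  sub_pos.mpr (arctan_lt_pi_div_two _)

lemma collarAngle_le_pi_div_two {ℓ : ℝ} (hℓ : 0 ≤ ℓ) : collarAngle ℓ ≤ π / 2 := by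
  have : 0 ≤ arctan (sinh (ℓ / 2)) := arctan_nonneg.mpr (sinh_nonneg_iff.mpr (by linarith))
  unfold collarAngle
  linarith

lemma collarAngle_antitone : Antitone collarAngle := fun _ _ h => by
  have := arctan_strictMono.monotone (sinh_le_sinh.mpr (div_le_div_of_nonneg_right h two_pos.le))
  unfold collarAngle
  linarith

lemma inv_collarRho_sq (ℓ s : ℝ) :
    (collarRho ℓ s ^ 2)⁻¹ = (2 * π / ℓ) ^ 2 * cos (ℓ * s / (2 * π)) ^ 2 := by
  rw [collarRho, ← inv_pow, inv_div]
  ring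

lemma integral_cos_sq_neg_self (a : ℝ) : ∫ x in -a..a, cos x ^ 2 = a + sin a * cos a := by
  rw [integral_cos_sq, cos_neg, sin_neg]
  ring

theorem integral_inv_collarRho_sq {ℓ : ℝ} (hℓ : ℓ ≠ 0) :
    ∫ s in -collarX ℓ..collarX ℓ, (collarRho ℓ s ^ 2)⁻¹
      = (2 * π / ℓ) ^ 3 * (collarAngle ℓ + sin (collarAngle ℓ) * cos (collarAngle ℓ)) := by
  have hk : 2 * π / ℓ ≠ 0 := div_ne_zero (by positivity) hℓ
  have hu : ∀ s, ℓ * s / (2 * π) = s / (2 * π / ℓ) := fun s => by field_simp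
  simp only [inv_collarRho_sq, hu, intervalIntegral.integral_const_mul]
  rw [intervalIntegral.integral_comp_div (fun u => cos u ^ 2) hk, collarX_eq,
    neg_div, mul_div_cancel_left₀ _ hk, integral_cos_sq_neg_self, smul_eq_mul]
  ring

theorem pow_mul_collarAngle_le_integral_inv_collarRho_sq {ℓ : ℝ} (hℓ : 0 < ℓ) :
    (2 * π / ℓ) ^ 3 * collarAngle ℓ
      ≤ ∫ s in -collarX ℓ..collarX ℓ, (collarRho ℓ s ^ 2)⁻¹ := by
  have hα := collarAngle_pos ℓ
  have hα' := collarAngle_le_pi_div_two hℓ.le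
  have hsin : 0 ≤ sin (collarAngle ℓ) := sin_nonneg_of_nonneg_of_le_pi hα.le (by linarith)
  have hcos : 0 ≤ cos (collarAngle ℓ) := cos_nonneg_of_neg_pi_div_two_le_of_le (by linarith) hα'
  rw [integral_inv_collarRho_sq hℓ.ne']
  gcongr
  exact le_add_of_nonneg_right (mul_nonneg hsin hcos)

/-- Uniform lower bound for the squared L²-norm of dz² on collars around geodesics of
bounded length: for every `L̄ > 0` there is `c₁ > 0` with `8π ∫ ρ_ℓ⁻² ≥ c₁` for
all `ℓ ∈ (0, L̄]`. -/
theorem collar_dz2_L2_lower_bound (Lbar : ℝ) (hL : 0 < Lbar) :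
    ∃ c₁ : ℝ, 0 < c₁ ∧ ∀ ℓ : ℝ, ℓ ∈ Set.Ioc 0 Lbar →
      c₁ ≤ 8 * Real.pi * ∫ s in (-collarX ℓ)..(collarX ℓ), (collarRho ℓ s ^ 2)⁻¹ := by
  have hα := collarAngle_pos Lbar
  refine ⟨8 * π * ((2 * π / Lbar) ^ 3 * collarAngle Lbar), by positivity, ?_⟩
  rintro ℓ ⟨hℓ, hℓL⟩
  gcongr
  calc (2 * π / Lbar) ^ 3 * collarAngle Lbar
      ≤ (2 * π / ℓ) ^ 3 * collarAngle ℓ := by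
        gcongr
        exact collarAngle_antitone hℓL
    _ ≤ _ := pow_mul_collarAngle_le_integral_inv_collarRho_sq hℓ
end

section
/- For all a, b, c > 0 one has (cosh c + cosh a · cosh b)/(sinh a · sinh b) > 1, so that G(a,b,c) = arcosh( (cosh c + cosh a·cosh b)/(sinh a·sinh b) ) is well defined and positive; moreover for every L̄ > 0 there exists a constant C such that for all a, b, c ∈ (0, L̄/2] the partial derivative of G with respect to c satisfies 0 < ∂G/∂c (a,b,c) = sinh c / ( sinh a · sinh b · sinh(G(a,b,c)) ) ≤ C · sinh c. -/
open Real

/-- Inverse hyperbolic cosine: `arcosh x = log(x + √(x² − 1))`. -/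
noncomputable def arcosh (x : ℝ) : ℝ := Real.log (x + Real.sqrt (x ^ 2 - 1))

/-- Length `G(a,b,c)` of the side opposite the side of length `c` in a right-angled geodesic
hexagon in the hyperbolic plane with alternating side lengths `a`, `b`, `c`. -/
noncomputable def hexG (a b c : ℝ) : ℝ :=
  _root_.arcosh ((Real.cosh c + Real.cosh a * Real.cosh b) / (Real.sinh a * Real.sinh b))

/-! With `D = sinh a sinh b` and `N = cosh c + cosh a cosh b` we have `cosh G = N / D`, and
`N - D = cosh c + cosh (a - b) ≥ 2`. Hence `D sinh G = √(N² - D²) ≥ 2`, and the chain rule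
`∂G/∂c = sinh c / (D sinh G)` gives the bound with `C = 1/2`, whatever `L̄` is. -/

theorem arcosh_eq_real_arcosh : _root_.arcosh = Real.arcosh := rfl

theorem sinh_mul_sinh_add_two_le (a b c : ℝ) :
    sinh a * sinh b + 2 ≤ cosh c + cosh a * cosh b := by
  linarith [cosh_sub a b, one_le_cosh (a - b), one_le_cosh c]

section

variable {a b : ℝ}

theorem one_lt_hexRatio (ha : 0 < a) (hb : 0 < b) (c : ℝ) :
    1 < (cosh c + cosh a * cosh b) / (sinh a * sinh b) := by
  rw [one_lt_div (mul_pos (sinh_pos_iff.2 ha) (sinh_pos_iff.2 hb))]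
  linarith [sinh_mul_sinh_add_two_le a b c]

theorem hexG_pos (ha : 0 < a) (hb : 0 < b) (c : ℝ) : 0 < hexG a b c :=
  Real.arcosh_pos (one_lt_hexRatio ha hb c)

theorem sinh_mul_sinh_mul_sinh_hexG (ha : 0 < a) (hb : 0 < b) (c : ℝ) :
    sinh a * sinh b * sinh (hexG a b c) =
      √((cosh c + cosh a * cosh b) ^ 2 - (sinh a * sinh b) ^ 2) := by
  have hD : 0 < sinh a * sinh b := mul_pos (sinh_pos_iff.2 ha) (sinh_pos_iff.2 hb)
  have hfactor : (cosh c + cosh a * cosh b) ^ 2 - (sinh a * sinh b) ^ 2 =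
      (sinh a * sinh b) ^ 2 * (((cosh c + cosh a * cosh b) / (sinh a * sinh b)) ^ 2 - 1) := by
    field_simp
  rw [hfactor, sqrt_mul (sq_nonneg _), sqrt_sq hD.le, hexG, arcosh_eq_real_arcosh,
    Real.sinh_arcosh (one_lt_hexRatio ha hb c).le]

theorem two_le_sinh_mul_sinh_mul_sinh_hexG (ha : 0 < a) (hb : 0 < b) (c : ℝ) :
    2 ≤ sinh a * sinh b * sinh (hexG a b c) := by
  have hD : 0 < sinh a * sinh b := mul_pos (sinh_pos_iff.2 ha) (sinh_pos_iff.2 hb)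
  have hND := sinh_mul_sinh_add_two_le a b c
  rw [sinh_mul_sinh_mul_sinh_hexG ha hb c, show (2 : ℝ) = √(2 ^ 2) by simp]
  gcongr
  nlinarith

theorem hasDerivAt_hexG (ha : 0 < a) (hb : 0 < b) (c : ℝ) :
    HasDerivAt (hexG a b) (sinh c / (sinh a * sinh b * sinh (hexG a b c))) c := by
  have hx := one_lt_hexRatio ha hb c
  have hratio : HasDerivAt (fun c' => (cosh c' + cosh a * cosh b) / (sinh a * sinh b))
      (sinh c / (sinh a * sinh b)) c :=
    ((hasDerivAt_cosh c).add_const _).div_const _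
  refine ((Real.hasDerivAt_arcosh hx).comp c hratio).congr_deriv ?_
  rw [hexG, arcosh_eq_real_arcosh, Real.sinh_arcosh hx.le]
  field_simp

end

/-- `G(a,b,c)` is well defined and positive, and for side lengths bounded by `L̄/2` its
partial derivative in `c` equals `sinh c/(sinh a sinh b sinh G)` and is positive and
bounded by `C sinh c`. -/
theorem hexagon_side_derivative :
    (∀ a b c : ℝ, 0 < a → 0 < b → 0 < c →
      1 < (Real.cosh c + Real.cosh a * Real.cosh b) / (Real.sinh a * Real.sinh b) ∧
      0 < hexG a b c) ∧
    ∀ Lbar : ℝ, 0 < Lbar → ∃ C : ℝ, ∀ a b c : ℝ,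
      a ∈ Set.Ioc 0 (Lbar / 2) → b ∈ Set.Ioc 0 (Lbar / 2) → c ∈ Set.Ioc 0 (Lbar / 2) →
        HasDerivAt (fun c' => hexG a b c')
            (Real.sinh c / (Real.sinh a * Real.sinh b * Real.sinh (hexG a b c))) c ∧
        0 < Real.sinh c / (Real.sinh a * Real.sinh b * Real.sinh (hexG a b c)) ∧
        Real.sinh c / (Real.sinh a * Real.sinh b * Real.sinh (hexG a b c)) ≤
          C * Real.sinh c := by
  refine ⟨fun a b c ha hb _ => ⟨one_lt_hexRatio ha hb c, hexG_pos ha hb c⟩,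
    fun _ _ => ⟨1 / 2, ?_⟩⟩
  rintro a b c ⟨ha, -⟩ ⟨hb, -⟩ ⟨hc, -⟩
  have hsinh_c := sinh_pos_iff.2 hc
  have hden := two_le_sinh_mul_sinh_mul_sinh_hexG ha hb c
  refine ⟨hasDerivAt_hexG ha hb c, div_pos hsinh_c (by linarith), ?_⟩
  calc sinh c / (sinh a * sinh b * sinh (hexG a b c)) ≤ sinh c / 2 :=
        div_le_div_of_nonneg_left hsinh_c.le two_pos hden
    _ = 1 / 2 * sinh c := by ring
end

section
/- For all a, b, c > 0 one has sinh(a) · sinh(G(a,b,c)) ≥ 1, where G(a,b,c) = arcosh( (cosh c + cosh a·cosh b)/(sinh a·sinh b) ). -/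
open Real

/-! Writing `x = cosh G`, one has `sinh G = √(x² - 1)` and
`sinh² a · (x² - 1) = ((cosh c + cosh a cosh b)² - sinh² a sinh² b) / sinh² b`.
Dropping `cosh c ≥ 0`, the numerator is at least `cosh² a cosh² b - sinh² a sinh² b
= 1 + sinh² a + sinh² b ≥ sinh² b`. -/

namespace RightAngledHexagon

variable {a b c : ℝ}

noncomputable def coshG (a b c : ℝ) : ℝ :=
  (cosh c + cosh a * cosh b) / (sinh a * sinh b)

theorem hexG_eq_arcosh_coshG : hexG a b c = Real.arcosh (coshG a b c) := rfl

theorem sq_cosh_mul_cosh_sub_sq_sinh_mul_sinh (a b : ℝ) :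
    (cosh a * cosh b) ^ 2 - (sinh a * sinh b) ^ 2 = 1 + sinh a ^ 2 + sinh b ^ 2 := by
  rw [mul_pow, mul_pow, cosh_sq, cosh_sq]
  ring

theorem one_le_sinh_sq_mul_coshG_sq_sub_one (ha : a ≠ 0) (hb : b ≠ 0) :
    1 ≤ sinh a ^ 2 * (coshG a b c ^ 2 - 1) := by
  have hsa : sinh a ≠ 0 := sinh_ne_zero.2 ha
  have hsb : 0 < sinh b ^ 2 := by positivity [sinh_ne_zero.2 hb]
  have hN : cosh a * cosh b ≤ cosh c + cosh a * cosh b := by linarith [cosh_pos c]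
  have hN_sq : (cosh a * cosh b) ^ 2 ≤ (cosh c + cosh a * cosh b) ^ 2 :=
    pow_le_pow_left₀ (by positivity) hN 2
  have h_eq : sinh a ^ 2 * (coshG a b c ^ 2 - 1) =
      ((cosh c + cosh a * cosh b) ^ 2 - (sinh a * sinh b) ^ 2) / sinh b ^ 2 := by
    unfold coshG
    field_simp
  rw [h_eq, le_div_iff₀ hsb]
  linarith [sq_cosh_mul_cosh_sub_sq_sinh_mul_sinh a b, sq_nonneg (sinh a)]

theorem one_le_coshG (ha : 0 < a) (hb : 0 < b) : 1 ≤ coshG a b c := by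
  have hpos : 0 < coshG a b c := by
    have := sinh_pos_iff.2 ha
    have := sinh_pos_iff.2 hb
    unfold coshG
    positivity
  refine (one_le_sq_iff₀ hpos.le).1 (le_of_not_gt fun h ↦ ?_)
  have := one_le_sinh_sq_mul_coshG_sq_sub_one (c := c) ha.ne' hb.ne'
  linarith [mul_nonpos_of_nonneg_of_nonpos (sq_nonneg (sinh a)) (sub_nonpos.2 h.le)]

end RightAngledHexagon

theorem hexagon_side_crosses_collar_general (a b c : ℝ) (ha : 0 < a) (hb : 0 < b) :
    1 ≤ Real.sinh a * Real.sinh (hexG a b c) := by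
  rw [RightAngledHexagon.hexG_eq_arcosh_coshG,
    sinh_arcosh (RightAngledHexagon.one_le_coshG ha hb),
    ← sqrt_sq (sinh_pos_iff.2 ha).le, ← sqrt_mul (sq_nonneg _)]
  exact one_le_sqrt.2 (RightAngledHexagon.one_le_sinh_sq_mul_coshG_sq_sub_one ha.ne' hb.ne')

/-- The side of length `G(a,b,c)` crosses the collar around the side of length `a`:
`sinh a · sinh G(a,b,c) ≥ 1`. -/
theorem hexagon_side_crosses_collar (a b c : ℝ) (ha : 0 < a) (hb : 0 < b) (hc : 0 < c) :
    1 ≤ Real.sinh a * Real.sinh (hexG a b c) :=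
  hexagon_side_crosses_collar_general a b c ha hb
end

section
/- For every L̄ > 0 there exists a constant C such that for all a, b, c ∈ (0, L̄/2] the function D(a,b,c) := arsinh( sinh(G(a,b,c)) · sinh a / sinh c ) − arsinh( 1/ sinh c ) is differentiable in c and satisfies | ∂D/∂c (a,b,c) | ≤ C·c. (The two individually divergent terms, the hexagon side length arsinh(sinh G · sinh a / sinh c) and the half collar width arsinh(1/sinh c), cancel to first order as c → 0.) -/
open Real

/-!
Both terms of `D` are logarithms: by the hexagon relation and `arsinh x = log (x + √(1 + x²))`,
`D = log (√P + cosh b cosh c + cosh a) - log (sinh b) - log (1 + cosh c)` with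
`P = (cosh c + cosh a cosh b)² - (sinh a sinh b)²`, the divergent `log (sinh c)` cancelling.
This is a smooth function of `cosh c`, so `∂D/∂c = sinh c · F` with `|F| ≤ 1` (because
`P ≥ cosh c + cosh a cosh b`), and `sinh c ≤ c cosh c ≤ c cosh (L̄/2)`.
-/

namespace Real

lemma sinh_le_mul_cosh {x : ℝ} (hx : 0 ≤ x) : sinh x ≤ x * cosh x := by
  have h := (convex_Icc 0 x).image_sub_le_mul_sub_of_deriv_le continuous_sinh.continuousOn
    differentiable_sinh.differentiableOn (C := cosh x)
    (fun y hy => by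
      rw [interior_Icc] at hy
      rw [deriv_sinh, cosh_le_cosh, abs_of_pos hy.1, abs_of_nonneg hx]
      exact hy.2.le)
    0 (Set.left_mem_Icc.2 hx) x (Set.right_mem_Icc.2 hx) hx
  simpa only [sinh_zero, sub_zero, mul_comm] using h

lemma arsinh_div_eq_log_sub_log {u v w : ℝ} (hv : 0 < v) (hw : 0 ≤ w)
    (h : w ^ 2 = u ^ 2 + v ^ 2) : arsinh (u / v) = log (u + w) - log v := by
  have huw : 0 < u + w := by
    have := (abs_lt_of_sq_lt_sq (by nlinarith) hw : |u| < w)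
    linarith [neg_abs_le u]
  have hsqrt : √(1 + (u / v) ^ 2) = w / v := by
    rw [← Real.sqrt_sq (div_nonneg hw hv.le)]
    congr 1
    field_simp
    linarith
  rw [arsinh, hsqrt, ← add_div, log_div huw.ne' hv.ne']

end Real

/-- `(sinh a · sinh b · sinh G(a,b,c))²`, since
`cosh G = (cosh c + cosh a cosh b) / (sinh a sinh b)`. -/
noncomputable def hexRadicand (a b c : ℝ) : ℝ :=
  (cosh c + cosh a * cosh b) ^ 2 - (sinh a * sinh b) ^ 2

lemma le_hexRadicand (a b c : ℝ) : cosh c + cosh a * cosh b ≤ hexRadicand a b c := by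
  have hsub : sinh a * sinh b + 1 ≤ cosh a * cosh b := by
    linarith [one_le_cosh (a - b), cosh_sub a b]
  have hadd : -(sinh a * sinh b) + 1 ≤ cosh a * cosh b := by
    linarith [one_le_cosh (a + b), cosh_add a b]
  have habs : |sinh a * sinh b| + 2 ≤ cosh c + cosh a * cosh b := by
    rcases abs_cases (sinh a * sinh b) with ⟨h, -⟩ | ⟨h, -⟩ <;> linarith [one_le_cosh c]
  rw [hexRadicand, ← sq_abs (sinh a * sinh b)]
  nlinarith [abs_nonneg (sinh a * sinh b)]

lemma hexRadicand_pos (a b c : ℝ) : 0 < hexRadicand a b c :=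
  (by positivity : 0 < cosh c + cosh a * cosh b).trans_le (le_hexRadicand a b c)

lemma sinh_hexG_mul_sinh_div_sinh {a b : ℝ} (ha : 0 < a) (hb : 0 < b) (c : ℝ) :
    sinh (hexG a b c) * sinh a / sinh c = √(hexRadicand a b c) / (sinh b * sinh c) := by
  have hsa : 0 < sinh a := sinh_pos_iff.2 ha
  have hsb : 0 < sinh b := sinh_pos_iff.2 hb
  set u := (cosh c + cosh a * cosh b) / (sinh a * sinh b)
  have hu : u ^ 2 - 1 = (√(hexRadicand a b c) / (sinh a * sinh b)) ^ 2 := by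
    rw [div_pow, div_pow, sq_sqrt (hexRadicand_pos a b c).le, hexRadicand]
    field_simp
  have hu1 : 1 ≤ u := by
    nlinarith [sq_nonneg (√(hexRadicand a b c) / (sinh a * sinh b)),
      (by positivity : 0 ≤ u)]
  rw [hexG, show _root_.arcosh u = Real.arcosh u from rfl, sinh_arcosh hu1, hu,
    Real.sqrt_sq (by positivity)]
  field_simp

lemma sq_sinh_mul_sinh_add_hexRadicand (a b c : ℝ) :
    (sinh b * sinh c) ^ 2 + hexRadicand a b c = (cosh b * cosh c + cosh a) ^ 2 := by
  simp only [hexRadicand, mul_pow, sinh_sq]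
  ring

noncomputable def sideMinusCollar (a b c : ℝ) : ℝ :=
  log (√(hexRadicand a b c) + cosh b * cosh c + cosh a) - log (sinh b) - log (1 + cosh c)

lemma arsinh_sub_arsinh_eq_sideMinusCollar {a b c : ℝ} (ha : 0 < a) (hb : 0 < b) (hc : 0 < c) :
    arsinh (sinh (hexG a b c) * sinh a / sinh c) - arsinh (1 / sinh c) =
      sideMinusCollar a b c := by
  have hsb : 0 < sinh b := sinh_pos_iff.2 hb
  have hsc : 0 < sinh c := sinh_pos_iff.2 hc
  have hside := arsinh_div_eq_log_sub_log (w := cosh b * cosh c + cosh a) (mul_pos hsb hsc)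
    (by positivity)
    (by rw [sq_sqrt (hexRadicand_pos a b c).le, ← sq_sinh_mul_sinh_add_hexRadicand]; ring)
  have hcollar := arsinh_div_eq_log_sub_log (u := 1) hsc (cosh_pos c).le
    (by rw [cosh_sq]; ring)
  rw [sinh_hexG_mul_sinh_div_sinh ha hb, hside, hcollar, log_mul hsb.ne' hsc.ne', ← add_assoc,
    sideMinusCollar]
  ring

noncomputable def sideMinusCollarDerivFactor (a b c : ℝ) : ℝ :=
  ((cosh c + cosh a * cosh b) / √(hexRadicand a b c) + cosh b) /
    (√(hexRadicand a b c) + cosh b * cosh c + cosh a) - 1 / (1 + cosh c)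

lemma hasDerivAt_sideMinusCollar (a b c : ℝ) :
    HasDerivAt (sideMinusCollar a b) (sinh c * sideMinusCollarDerivFactor a b c) c := by
  have hP := hexRadicand_pos a b c
  have hsP : 0 < √(hexRadicand a b c) := sqrt_pos.2 hP
  have hP' : HasDerivAt (hexRadicand a b) (2 * (cosh c + cosh a * cosh b) ^ 1 * sinh c) c :=
    (((hasDerivAt_cosh c).add_const _).pow 2).sub_const _
  have hside : HasDerivAt (fun y => log (√(hexRadicand a b y) + cosh b * cosh y + cosh a))
      ((2 * (cosh c + cosh a * cosh b) ^ 1 * sinh c / (2 * √(hexRadicand a b c)) +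
        cosh b * sinh c) / (√(hexRadicand a b c) + cosh b * cosh c + cosh a)) c :=
    (((hP'.sqrt hP.ne').add ((hasDerivAt_cosh c).const_mul (cosh b))).add_const
      (cosh a)).log (by simp only [Pi.add_apply]; positivity)
  have hcollar := ((hasDerivAt_cosh c).const_add 1).log (by positivity)
  refine ((hside.sub_const (log (sinh b))).sub hcollar).congr_deriv ?_
  rw [sideMinusCollarDerivFactor]
  field_simp

lemma abs_sideMinusCollarDerivFactor_le_one (a b c : ℝ) :
    |sideMinusCollarDerivFactor a b c| ≤ 1 := by
  have hsP : 0 < √(hexRadicand a b c) := sqrt_pos.2 (hexRadicand_pos a b c)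
  have hE : (cosh c + cosh a * cosh b) / √(hexRadicand a b c) ≤ √(hexRadicand a b c) := by
    rw [div_le_iff₀ hsP, mul_self_sqrt (hexRadicand_pos a b c).le]
    exact le_hexRadicand a b c
  have hb : cosh b ≤ cosh b * cosh c := le_mul_of_one_le_right (cosh_pos b).le (one_le_cosh c)
  have hside : ((cosh c + cosh a * cosh b) / √(hexRadicand a b c) + cosh b) /
      (√(hexRadicand a b c) + cosh b * cosh c + cosh a) ≤ 1 :=
    div_le_one_of_le₀ (by linarith [cosh_pos a]) (by positivity)
  have hcollar : 1 / (1 + cosh c) ≤ 1 :=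
    div_le_one_of_le₀ (by linarith [cosh_pos c]) (by positivity)
  rw [sideMinusCollarDerivFactor]
  simpa only [sub_zero] using
    abs_sub_le_of_le_of_le (lb := 0) (by positivity) hside (by positivity) hcollar

theorem hexagon_side_minus_collar_derivative_general (Lbar : ℝ) :
    ∃ C : ℝ, ∀ a b c : ℝ,
      a ∈ Set.Ioc 0 (Lbar / 2) → b ∈ Set.Ioc 0 (Lbar / 2) → c ∈ Set.Ioc 0 (Lbar / 2) →
        DifferentiableAt ℝ
          (fun c' => Real.arsinh (Real.sinh (hexG a b c') * Real.sinh a / Real.sinh c') -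
            Real.arsinh (1 / Real.sinh c')) c ∧
        |deriv (fun c' => Real.arsinh (Real.sinh (hexG a b c') * Real.sinh a / Real.sinh c') -
            Real.arsinh (1 / Real.sinh c')) c| ≤ C * c := by
  refine ⟨cosh (Lbar / 2), fun a b c ⟨ha, _⟩ ⟨hb, _⟩ ⟨hc, hcL⟩ => ?_⟩
  have hD := (hasDerivAt_sideMinusCollar a b c).congr_of_eventuallyEq <| by
    filter_upwards [Ioi_mem_nhds hc] with c' hc'
    exact arsinh_sub_arsinh_eq_sideMinusCollar ha hb hc'
  refine ⟨hD.differentiableAt, ?_⟩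
  have hsc : 0 < sinh c := sinh_pos_iff.2 hc
  have hcosh : cosh c ≤ cosh (Lbar / 2) := by
    rw [cosh_le_cosh, abs_of_pos hc, abs_of_pos (hc.trans_le hcL)]
    exact hcL
  rw [hD.deriv, abs_mul, abs_of_pos hsc]
  calc sinh c * |sideMinusCollarDerivFactor a b c| ≤ sinh c * 1 :=
        mul_le_mul_of_nonneg_left (abs_sideMinusCollarDerivFactor_le_one a b c) hsc.le
    _ ≤ c * cosh c := (mul_one _).trans_le (sinh_le_mul_cosh hc.le)
    _ ≤ cosh (Lbar / 2) * c := by rw [mul_comm]; exact mul_le_mul_of_nonneg_right hcosh hc.le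

/-- The difference `D(a,b,c)` between the hexagon side length
`arsinh(sinh G(a,b,c) · sinh a / sinh c)` and the half collar width `arsinh(1/sinh c)`
is differentiable in `c` with `|∂D/∂c| ≤ C c`: the two individually divergent terms
cancel to first order as `c → 0`. -/
theorem hexagon_side_minus_collar_derivative (Lbar : ℝ) (hL : 0 < Lbar) :
    ∃ C : ℝ, ∀ a b c : ℝ,
      a ∈ Set.Ioc 0 (Lbar / 2) → b ∈ Set.Ioc 0 (Lbar / 2) → c ∈ Set.Ioc 0 (Lbar / 2) →
        DifferentiableAt ℝ
          (fun c' => Real.arsinh (Real.sinh (hexG a b c') * Real.sinh a / Real.sinh c') -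
            Real.arsinh (1 / Real.sinh c')) c ∧
        |deriv (fun c' => Real.arsinh (Real.sinh (hexG a b c') * Real.sinh a / Real.sinh c') -
            Real.arsinh (1 / Real.sinh c')) c| ≤ C * c :=
  hexagon_side_minus_collar_derivative_general Lbar
end

section
/- There exists a constant C > 0 such that for every ℓ ∈ (0, 2·arsinh(1)] and every holomorphic function f on the strip S = { z ∈ ℂ : |Re z| < X(ℓ) } with f(z+2πi) = f(z), the constant mean b₀(f) = (1/2π)∫₀^{2π} f(s+iθ) dθ satisfies |b₀(f)| ≤ C·ℓ^{3/2} · ( ∫_{−X(ℓ)}^{X(ℓ)} ∫₀^{2π} 4·|f(s+iθ)|² · ρ_ℓ(s)^{−2} dθ ds )^{1/2}. -/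
open Real MeasureTheory Complex

/-!
The mean `∫₀^{2π} f(s + iθ) dθ` does not depend on `s`: Cauchy's theorem on the rectangle with
vertices `s`, `t`, `t + 2πi`, `s + 2πi` applies, and periodicity cancels its horizontal sides.
Cauchy–Schwarz on the circle `Re z = t` then bounds its square by `2π ∫₀^{2π} |f(t + iθ)|² dθ`
for every `t`. For `ℓ ≤ 2 arsinh 1` the collar contains the interval `|t| ≤ π²/(2ℓ)`, on which
`|ℓt/2π| ≤ π/4`, hence `ρ_ℓ(t)⁻² ≥ 2π²/ℓ²`. Integrating over this interval of length `π²/ℓ`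
gives `‖Υ‖² ≥ 16π⁵ |b₀|² / ℓ³`, so `C = 1` works.
-/

open scoped ENNReal

theorem intervalIntegral_vertical_eq_of_periodic {U : Set ℝ} [U.OrdConnected] {f : ℂ → ℂ}
    (hf : DifferentiableOn ℂ f (re ⁻¹' U)) {T : ℝ}
    (hper : ∀ z ∈ re ⁻¹' U, f (z + T * I) = f z) {s t : ℝ} (hs : s ∈ U) (ht : t ∈ U) :
    ∫ θ in (0 : ℝ)..T, f (t + θ * I) = ∫ θ in (0 : ℝ)..T, f (s + θ * I) := by
  have hseg : Set.uIcc s t ⊆ U := Set.OrdConnected.uIcc_subset ‹_› hs ht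
  have H := integral_boundary_rect_eq_zero_of_differentiableOn f s (t + T * I)
    (hf.mono fun z hz => hseg (by simpa using hz.1))
  have hhor : ∫ x in s..t, f (x + T * I) = ∫ x in s..t, f x :=
    intervalIntegral.integral_congr fun x hx => hper x (hseg hx)
  simp only [ofReal_re, ofReal_im, add_re, add_im, mul_re, mul_im, I_re, I_im, mul_zero,
    mul_one, zero_mul, add_zero, zero_add, ofReal_zero, hhor, sub_self, smul_eq_mul] at H
  exact mul_left_cancel₀ I_ne_zero (sub_eq_zero.mp H)

theorem enorm_intervalIntegral_sq_le {E : Type*} [NormedAddCommGroup E] [NormedSpace ℝ E]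
    {g : ℝ → E} {a b : ℝ} (hab : a ≤ b)
    (hg : AEStronglyMeasurable g (volume.restrict (Set.Ioo a b))) :
    ‖∫ x in a..b, g x‖ₑ ^ 2 ≤ ENNReal.ofReal (b - a) * ∫⁻ x in Set.Ioo a b, ‖g x‖ₑ ^ 2 := by
  have hL1 : ‖∫ x in a..b, g x‖ₑ ≤ ∫⁻ x in Set.Ioo a b, ‖g x‖ₑ := by
    rw [intervalIntegral.integral_of_le hab, integral_Ioc_eq_integral_Ioo]
    exact enorm_integral_le_lintegral_enorm _
  have hHolder := ENNReal.lintegral_mul_le_Lp_mul_Lq (volume.restrict (Set.Ioo a b))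
    Real.HolderConjugate.two_two hg.enorm (aemeasurable_const (b := (1 : ℝ≥0∞)))
  simp only [Pi.mul_apply, mul_one, ENNReal.rpow_two, one_pow, setLIntegral_one,
    Real.volume_Ioo] at hHolder
  calc ‖∫ x in a..b, g x‖ₑ ^ 2
      ≤ ((∫⁻ x in Set.Ioo a b, ‖g x‖ₑ ^ 2) ^ (1 / 2 : ℝ) *
          ENNReal.ofReal (b - a) ^ (1 / 2 : ℝ)) ^ 2 := by
        gcongr; exact hL1.trans hHolder
    _ = _ := by
        rw [← ENNReal.mul_rpow_of_nonneg _ _ (by norm_num), ← ENNReal.rpow_natCast,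
          ← ENNReal.rpow_mul, mul_comm]
        norm_num

theorem enorm_integral_vertical_sq_le_of_periodic {U : Set ℝ} [U.OrdConnected] {f : ℂ → ℂ}
    (hf : DifferentiableOn ℂ f (re ⁻¹' U)) {T : ℝ} (hT : 0 ≤ T)
    (hper : ∀ z ∈ re ⁻¹' U, f (z + T * I) = f z) {s t : ℝ} (hs : s ∈ U) (ht : t ∈ U) :
    ‖∫ θ in (0 : ℝ)..T, f (s + θ * I)‖ₑ ^ 2 ≤
      ENNReal.ofReal T * ∫⁻ θ in Set.Ioo 0 T, ‖f (t + θ * I)‖ₑ ^ 2 := by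
  have hcont : Continuous fun θ : ℝ => f (t + θ * I) :=
    hf.continuousOn.comp_continuous (by fun_prop) fun θ => by simpa using ht
  rw [← intervalIntegral_vertical_eq_of_periodic hf hper hs ht]
  simpa using enorm_intervalIntegral_sq_le hT hcont.aestronglyMeasurable

theorem ENNReal.le_mul_rpow_half_of_sq_le {a b c : ℝ≥0∞} (h : a ^ 2 ≤ b ^ 2 * c) :
    a ≤ b * c ^ (1 / 2 : ℝ) := by
  have hsqrt : ∀ x : ℝ≥0∞, (x ^ 2) ^ (1 / 2 : ℝ) = x := fun x => by
    rw [← ENNReal.rpow_natCast, ← ENNReal.rpow_mul]; norm_num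
  calc a = (a ^ 2) ^ (1 / 2 : ℝ) := (hsqrt a).symm
    _ ≤ (b ^ 2 * c) ^ (1 / 2 : ℝ) := ENNReal.rpow_le_rpow h (by norm_num)
    _ = b * c ^ (1 / 2 : ℝ) := by rw [ENNReal.mul_rpow_of_nonneg _ _ (by norm_num), hsqrt]

theorem ENNReal.ofReal_mul_le_ofReal_mul_rpow_half {x y k : ℝ} {B N : ℝ≥0∞} (hx : 0 ≤ x)
    (hy : 0 ≤ y) (hxy : x ^ 2 ≤ y ^ 2 * k) (hN : ENNReal.ofReal k * B ^ 2 ≤ N) :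
    ENNReal.ofReal x * B ≤ ENNReal.ofReal y * N ^ (1 / 2 : ℝ) := by
  refine ENNReal.le_mul_rpow_half_of_sq_le ?_
  calc (ENNReal.ofReal x * B) ^ 2 = ENNReal.ofReal (x ^ 2) * B ^ 2 := by
        rw [mul_pow, ENNReal.ofReal_pow hx]
    _ ≤ ENNReal.ofReal (y ^ 2 * k) * B ^ 2 := by gcongr
    _ = ENNReal.ofReal y ^ 2 * (ENNReal.ofReal k * B ^ 2) := by
        rw [ENNReal.ofReal_mul (by positivity), ENNReal.ofReal_pow hy, mul_assoc]
    _ ≤ ENNReal.ofReal y ^ 2 * N := by gcongr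

theorem pi_sq_div_two_mul_le_collarX {ℓ : ℝ} (hℓ : ℓ ∈ Set.Ioc 0 (2 * arsinh 1)) :
    π ^ 2 / (2 * ℓ) ≤ collarX ℓ := by
  obtain ⟨hℓ0, hℓ1⟩ := hℓ
  have hsinh : Real.sinh (ℓ / 2) ≤ 1 := by
    simpa using Real.sinh_le_sinh.mpr (show ℓ / 2 ≤ arsinh 1 by linarith)
  have harctan : Real.arctan (Real.sinh (ℓ / 2)) ≤ π / 4 :=
    arctan_one ▸ arctan_strictMono.monotone hsinh
  calc π ^ 2 / (2 * ℓ) = 2 * π / ℓ * (π / 4) := by field_simp; ring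
    _ ≤ collarX ℓ := by unfold collarX; gcongr; linarith

theorem two_mul_pi_sq_div_sq_le_inv_collarRho_sq {ℓ t : ℝ} (hℓ : 0 < ℓ)
    (ht : |t| ≤ π ^ 2 / (2 * ℓ)) : 2 * π ^ 2 / ℓ ^ 2 ≤ (collarRho ℓ t ^ 2)⁻¹ := by
  rw [collarRho]
  set u := ℓ * t / (2 * π)
  have hu : |2 * u| ≤ π / 2 := by
    rw [abs_mul, abs_div, abs_mul, abs_of_pos hℓ, abs_of_pos (by positivity : 0 < 2 * π)]
    rw [le_div_iff₀ (by positivity)] at ht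
    rw [abs_two]; field_simp; nlinarith [pi_pos]
  have hcos : 1 / 2 ≤ Real.cos u ^ 2 := by
    rw [Real.cos_sq u]
    linarith [cos_nonneg_of_neg_pi_div_two_le_of_le (abs_le.mp hu).1 (abs_le.mp hu).2]
  rw [div_pow, inv_div, mul_pow, mul_pow, div_le_div_iff_of_pos_right (by positivity)]
  nlinarith [pi_pos]

noncomputable def collarL2NormSq (ℓ : ℝ) (f : ℂ → ℂ) : ℝ≥0∞ :=
  ∫⁻ t in Set.Ioo (-collarX ℓ) (collarX ℓ), ∫⁻ θ in Set.Ioo 0 (2 * π),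
    ENNReal.ofReal (4 * ‖f (t + θ * I)‖ ^ 2 * (collarRho ℓ t ^ 2)⁻¹)

theorem ofReal_mul_enorm_sq_le_lintegral_collar_slice {ℓ : ℝ} (hℓ : 0 < ℓ) {f : ℂ → ℂ}
    (hf : DifferentiableOn ℂ f (re ⁻¹' Set.Ioo (-collarX ℓ) (collarX ℓ)))
    (hper : ∀ z ∈ re ⁻¹' Set.Ioo (-collarX ℓ) (collarX ℓ), f (z + 2 * π * I) = f z)
    {s t : ℝ} (hs : s ∈ Set.Ioo (-collarX ℓ) (collarX ℓ))
    (ht : t ∈ Set.Ioo (-collarX ℓ) (collarX ℓ)) (ht' : |t| ≤ π ^ 2 / (2 * ℓ)) :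
    ENNReal.ofReal (4 * π / ℓ ^ 2) * ‖∫ θ in (0 : ℝ)..(2 * π), f (s + θ * I)‖ₑ ^ 2 ≤
      ∫⁻ θ in Set.Ioo 0 (2 * π),
        ENNReal.ofReal (4 * ‖f (t + θ * I)‖ ^ 2 * (collarRho ℓ t ^ 2)⁻¹) := by
  have hρ := two_mul_pi_sq_div_sq_le_inv_collarRho_sq hℓ ht'
  calc ENNReal.ofReal (4 * π / ℓ ^ 2) * ‖∫ θ in (0 : ℝ)..(2 * π), f (s + θ * I)‖ₑ ^ 2
      ≤ ENNReal.ofReal (4 * π / ℓ ^ 2) *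
          (ENNReal.ofReal (2 * π) * ∫⁻ θ in Set.Ioo 0 (2 * π), ‖f (t + θ * I)‖ₑ ^ 2) := by
        gcongr
        exact enorm_integral_vertical_sq_le_of_periodic hf (by positivity)
          (fun z hz => by push_cast; exact hper z hz) hs ht
    _ = ∫⁻ θ in Set.Ioo 0 (2 * π),
          ENNReal.ofReal (8 * π ^ 2 / ℓ ^ 2) * ‖f (t + θ * I)‖ₑ ^ 2 := by
        rw [← mul_assoc, ← ENNReal.ofReal_mul (by positivity),
          lintegral_const_mul' _ _ ENNReal.ofReal_ne_top]
        congr 2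
        ring
    _ ≤ _ := by
        refine lintegral_mono fun θ => ?_
        rw [← ofReal_norm, ← ENNReal.ofReal_pow (norm_nonneg _),
          ← ENNReal.ofReal_mul (by positivity)]
        apply ENNReal.ofReal_le_ofReal
        calc 8 * π ^ 2 / ℓ ^ 2 * ‖f (t + θ * I)‖ ^ 2
            = 4 * (2 * π ^ 2 / ℓ ^ 2 * ‖f (t + θ * I)‖ ^ 2) := by ring
          _ ≤ 4 * ((collarRho ℓ t ^ 2)⁻¹ * ‖f (t + θ * I)‖ ^ 2) := by gcongr
          _ = _ := by ring

theorem ofReal_mul_enorm_sq_le_collarL2NormSq {ℓ : ℝ} (hℓ : ℓ ∈ Set.Ioc 0 (2 * arsinh 1))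
    {f : ℂ → ℂ} (hf : DifferentiableOn ℂ f {z : ℂ | |z.re| < collarX ℓ})
    (hper : ∀ z ∈ {z : ℂ | |z.re| < collarX ℓ}, f (z + 2 * π * I) = f z)
    {s : ℝ} (hs : s ∈ Set.Ioo (-collarX ℓ) (collarX ℓ)) :
    ENNReal.ofReal (4 * π ^ 3 / ℓ ^ 3) * ‖∫ θ in (0 : ℝ)..(2 * π), f (s + θ * I)‖ₑ ^ 2 ≤
      collarL2NormSq ℓ f := by
  set A := ‖∫ θ in (0 : ℝ)..(2 * π), f (s + θ * I)‖ₑ ^ 2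
  set J := Set.Ioo (-(π ^ 2 / (2 * ℓ))) (π ^ 2 / (2 * ℓ))
  have hX := pi_sq_div_two_mul_le_collarX hℓ
  have hJ : J ⊆ Set.Ioo (-collarX ℓ) (collarX ℓ) := Set.Ioo_subset_Ioo (neg_le_neg hX) hX
  have hstrip : {z : ℂ | |z.re| < collarX ℓ} = re ⁻¹' Set.Ioo (-collarX ℓ) (collarX ℓ) := by
    ext z; simp [abs_lt]
  rw [hstrip] at hf hper
  calc ENNReal.ofReal (4 * π ^ 3 / ℓ ^ 3) * A
      = ∫⁻ _ in J, ENNReal.ofReal (4 * π / ℓ ^ 2) * A := by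
        rw [setLIntegral_const, Real.volume_Ioo, mul_right_comm,
          ← ENNReal.ofReal_mul (by positivity)]
        congr 2
        field_simp
        ring
    _ ≤ _ := setLIntegral_mono' measurableSet_Ioo fun t ht =>
        ofReal_mul_enorm_sq_le_lintegral_collar_slice hℓ.1 hf hper hs (hJ ht)
          (abs_le.mpr ⟨ht.1.le, ht.2.le⟩)
    _ ≤ collarL2NormSq ℓ f := lintegral_mono_set hJ

/-- There is a universal constant `C > 0` such that for every `ℓ ∈ (0, 2 arsinh 1]` and
every holomorphic quadratic differential `f·dz²` on the standard collar (i.e. `f` holomorphic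
and `2πi`-periodic on the strip `{|Re z| < X(ℓ)}`), the principal-part coefficient
`b₀(f) = (1/2π)∫₀^{2π} f(s+iθ) dθ` satisfies
`|b₀(f)| ≤ C ℓ^{3/2} · (∫∫ 4|f|² ρ_ℓ⁻² dθ ds)^{1/2} = C ℓ^{3/2} ‖f·dz²‖_{L²}`. -/
theorem principal_part_coefficient_bound :
    ∃ C : ℝ, 0 < C ∧ ∀ ℓ : ℝ, ℓ ∈ Set.Ioc 0 (2 * Real.arsinh 1) →
      ∀ f : ℂ → ℂ, DifferentiableOn ℂ f {z : ℂ | |z.re| < collarX ℓ} →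
        (∀ z ∈ {z : ℂ | |z.re| < collarX ℓ}, f (z + 2 * Real.pi * Complex.I) = f z) →
        ∀ s ∈ Set.Ioo (-collarX ℓ) (collarX ℓ),
          ENNReal.ofReal (‖(1 / (2 * Real.pi) : ℂ) *
              ∫ θ in (0 : ℝ)..(2 * Real.pi), f ((s : ℂ) + θ * Complex.I)‖) ≤
            ENNReal.ofReal (C * ℓ ^ ((3 : ℝ) / 2)) *
              (∫⁻ t in Set.Ioo (-collarX ℓ) (collarX ℓ), ∫⁻ θ in Set.Ioo 0 (2 * Real.pi),
                ENNReal.ofReal (4 * ‖f ((t : ℂ) + θ * Complex.I)‖ ^ 2 *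
                  (collarRho ℓ t ^ 2)⁻¹)) ^ ((1 : ℝ) / 2) := by
  refine ⟨1, one_pos, fun ℓ hℓ f hf hper s hs => ?_⟩
  have hsq : (ℓ ^ ((3 : ℝ) / 2)) ^ 2 = ℓ ^ 3 := by
    rw [← Real.rpow_natCast, ← Real.rpow_mul hℓ.1.le]; norm_num
  rw [norm_mul, show ‖(1 / (2 * π) : ℂ)‖ = 1 / (2 * π) by simp [pi_pos.le],
    ENNReal.ofReal_mul (by positivity), ofReal_norm, one_mul]
  refine ENNReal.ofReal_mul_le_ofReal_mul_rpow_half (by positivity) (rpow_nonneg hℓ.1.le _) ?_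
    (ofReal_mul_enorm_sq_le_collarL2NormSq hℓ hf hper hs)
  rw [hsq, mul_div_cancel₀ _ (pow_pos hℓ.1 3).ne', div_pow, one_pow,
    div_le_iff₀ (by positivity)]
  nlinarith [one_le_pow₀ (n := 5) (one_le_two.trans two_le_pi)]
end

section
/- Let ℓ > 0, X = X(ℓ), let f be holomorphic on the strip S = { z ∈ ℂ : |Re z| < X } with f(z+2πi) = f(z) and with ∫∫ |f(s+iθ)| dθ ds < ∞, and let ξ : (−X, X) → ℝ be continuously differentiable with ξ′ compactly supported in (−X,X) and ∫_{−X}^{X} ξ′(s) ds = 1. Then the L²-pairing of the quadratic differentials Υ = f·dz² and K = −i·ξ′(s)·ρ_ℓ(s)²·dz², namely 4·∫_{−X}^{X} ∫₀^{2π} f(s+iθ) · conj( −i·ξ′(s)·ρ_ℓ(s)² ) · ρ_ℓ(s)^{−2} dθ ds, equals 8π·i·b₀(f), where b₀(f) = (1/2π)∫₀^{2π} f(s+iθ) dθ is the (s-independent) mean of f over vertical circles. -/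
open Real MeasureTheory Complex

/-!
On the support of `ξ′` the conformal factors `ρ_ℓ(s)²` of `K` and of the metric cancel, so the
pairing is `4i ∫ ξ′(s) (∫₀^{2π} f(s+iθ) dθ) ds`. By Cauchy's theorem on the rectangle
`[0, s] × [0, 2π]`, whose horizontal sides cancel by `2πi`-periodicity, the circle integral
of `f` does not depend on `s`; it factors out and `∫ ξ′ = 1` leaves `4i · 2π b₀(f)`.
-/

open Set
open scoped Interval

theorem integral_vertical_eq_of_periodic {E : Type*} [NormedAddCommGroup E] [NormedSpace ℂ E]
    {f : ℂ → E} {a b T : ℝ}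
    (hf : DifferentiableOn ℂ f ([[a, b]] ×ℂ [[0, T]]))
    (hper : ∀ x ∈ [[a, b]], f (x + T * I) = f x) :
    ∫ y in (0 : ℝ)..T, f (a + y * I) = ∫ y in (0 : ℝ)..T, f (b + y * I) := by
  have hrect := integral_boundary_rect_eq_zero_of_differentiableOn f a (b + T * I)
    (by simpa using hf)
  have hhoriz : ∫ x in a..b, f (x + T * I) = ∫ x in a..b, f x :=
    intervalIntegral.integral_congr fun x hx => hper x hx
  simp only [ofReal_re, ofReal_im, add_re, add_im, mul_re, mul_im, I_re, I_im, ofReal_zero,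
    zero_mul, add_zero, mul_zero, mul_one, sub_zero, zero_add] at hrect
  rw [hhoriz, sub_self, zero_add, ← smul_sub, smul_eq_zero] at hrect
  exact (sub_eq_zero.1 (hrect.resolve_left I_ne_zero)).symm

theorem cos_pos_of_abs_lt_collarX {ℓ s : ℝ} (hℓ : 0 < ℓ) (hs : |s| < collarX ℓ) :
    0 < Real.cos (ℓ * s / (2 * π)) := by
  have harctan : 0 < arctan (sinh (ℓ / 2)) := arctan_pos.2 (sinh_pos_iff.2 (by linarith))
  have hX : ℓ * collarX ℓ / (2 * π) = π / 2 - arctan (sinh (ℓ / 2)) := by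
    unfold collarX; field_simp
  have habs : |ℓ * s / (2 * π)| < π / 2 := by
    rw [abs_div, abs_mul, abs_of_pos hℓ, abs_of_pos (by positivity : (0 : ℝ) < 2 * π)]
    calc ℓ * |s| / (2 * π) < ℓ * collarX ℓ / (2 * π) := by gcongr
      _ < π / 2 := by linarith
  exact cos_pos_of_mem_Ioo (abs_lt.1 habs)

theorem collarRho_ne_zero {ℓ s : ℝ} (hℓ : 0 < ℓ) (hs : |s| < collarX ℓ) :
    collarRho ℓ s ≠ 0 :=
  (div_pos hℓ (mul_pos (by positivity) (cos_pos_of_abs_lt_collarX hℓ hs))).ne'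

theorem integral_collar_circle_eq {ℓ : ℝ} {f : ℂ → ℂ}
    (hf : DifferentiableOn ℂ f {z : ℂ | |z.re| < collarX ℓ})
    (hper : ∀ z ∈ {z : ℂ | |z.re| < collarX ℓ}, f (z + 2 * π * I) = f z)
    {s : ℝ} (hs : |s| < collarX ℓ) :
    ∫ θ in (0 : ℝ)..(2 * π), f (s + θ * I) = ∫ θ in (0 : ℝ)..(2 * π), f (0 + θ * I) := by
  have hstrip : ∀ x ∈ [[(0 : ℝ), s]], |x| < collarX ℓ := fun x hx => by
    simpa using (abs_sub_left_of_mem_uIcc hx).trans_lt (by simpa using hs)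
  have h := integral_vertical_eq_of_periodic (a := 0) (b := s) (T := 2 * π)
    (hf.mono fun z hz => hstrip z.re hz.1) fun x hx => by
      simpa using hper x (by simpa using hstrip x hx)
  simpa using h.symm

theorem mul_conj_twist_mul_inv (w : ℂ) (d : ℝ) {ρ : ℝ} (hρ : ρ ≠ 0) :
    w * (starRingEnd ℂ) (-I * d * (ρ : ℂ) ^ 2) * ((ρ : ℂ) ^ 2)⁻¹ = d * I * w := by
  have hρ' : (ρ : ℂ) ≠ 0 := ofReal_ne_zero.2 hρ
  simp only [map_mul, map_neg, map_pow, conj_ofReal, conj_I]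
  field_simp

theorem dehn_twist_pairing_general (ℓ : ℝ) (hℓ : 0 < ℓ) (f : ℂ → ℂ)
    (hf : DifferentiableOn ℂ f {z : ℂ | |z.re| < collarX ℓ})
    (hper : ∀ z ∈ {z : ℂ | |z.re| < collarX ℓ}, f (z + 2 * Real.pi * Complex.I) = f z)
    (ξ : ℝ → ℝ)
    (hsupp' : Function.support (deriv ξ) ⊆ Set.Ioo (-collarX ℓ) (collarX ℓ))
    (hξint : (∫ s in (-collarX ℓ)..(collarX ℓ), deriv ξ s) = 1) :
    (4 : ℂ) * ∫ s in (-collarX ℓ)..(collarX ℓ), ∫ θ in (0 : ℝ)..(2 * Real.pi),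
        f ((s : ℂ) + θ * Complex.I) *
          (starRingEnd ℂ) (-Complex.I * Complex.ofReal (deriv ξ s) * Complex.ofReal (collarRho ℓ s) ^ 2) *
          (Complex.ofReal (collarRho ℓ s) ^ 2)⁻¹ =
      8 * Real.pi * Complex.I * ((1 / (2 * Real.pi) : ℂ) *
        ∫ θ in (0 : ℝ)..(2 * Real.pi), f ((0 : ℂ) + θ * Complex.I)) := by
  set b₀ := ∫ θ in (0 : ℝ)..(2 * π), f (0 + θ * I)
  have hinner : ∀ s : ℝ, ∫ θ in (0 : ℝ)..(2 * π), f (s + θ * I) *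
      (starRingEnd ℂ) (-I * deriv ξ s * (collarRho ℓ s : ℂ) ^ 2) * ((collarRho ℓ s : ℂ) ^ 2)⁻¹ =
      deriv ξ s * (I * b₀) := by
    intro s
    by_cases hd : deriv ξ s = 0
    · simp [hd]
    obtain ⟨hlo, hhi⟩ := hsupp' hd
    have hs : |s| < collarX ℓ := abs_lt.2 ⟨hlo, hhi⟩
    simp_rw [mul_conj_twist_mul_inv _ _ (collarRho_ne_zero hℓ hs),
      intervalIntegral.integral_const_mul, integral_collar_circle_eq hf hper hs]
    ring
  simp_rw [hinner, intervalIntegral.integral_mul_const, intervalIntegral.integral_ofReal, hξint,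
    ofReal_one]
  field_simp
  ring

/-- The L²-pairing of an integrable holomorphic quadratic differential `Υ = f·dz²` on the
standard collar with the Dehn-twist variation `K = −i ξ′(s) ρ_ℓ(s)² dz²` (where `ξ′` is
compactly supported in `(−X, X)` with `∫ ξ′ = 1`) equals `8πi·b₀(f)`, where
`b₀(f) = (1/2π)∫₀^{2π} f(s+iθ) dθ` is the (s-independent) mean of `f` over vertical
circles. -/
theorem dehn_twist_pairing (ℓ : ℝ) (hℓ : 0 < ℓ) (f : ℂ → ℂ)
    (hf : DifferentiableOn ℂ f {z : ℂ | |z.re| < collarX ℓ})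
    (hper : ∀ z ∈ {z : ℂ | |z.re| < collarX ℓ}, f (z + 2 * Real.pi * Complex.I) = f z)
    (hint : (∫⁻ s in Set.Ioo (-collarX ℓ) (collarX ℓ), ∫⁻ θ in Set.Ioo 0 (2 * Real.pi),
      ENNReal.ofReal ‖f ((s : ℂ) + θ * Complex.I)‖) < ⊤)
    (ξ : ℝ → ℝ) (hξ : ContDiff ℝ 1 ξ)
    (hsupp : HasCompactSupport (deriv ξ))
    (hsupp' : Function.support (deriv ξ) ⊆ Set.Ioo (-collarX ℓ) (collarX ℓ))
    (hξint : (∫ s in (-collarX ℓ)..(collarX ℓ), deriv ξ s) = 1) :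
    (4 : ℂ) * ∫ s in (-collarX ℓ)..(collarX ℓ), ∫ θ in (0 : ℝ)..(2 * Real.pi),
        f ((s : ℂ) + θ * Complex.I) *
          (starRingEnd ℂ) (-Complex.I * Complex.ofReal (deriv ξ s) * Complex.ofReal (collarRho ℓ s) ^ 2) *
          (Complex.ofReal (collarRho ℓ s) ^ 2)⁻¹ =
      8 * Real.pi * Complex.I * ((1 / (2 * Real.pi) : ℂ) *
        ∫ θ in (0 : ℝ)..(2 * Real.pi), f ((0 : ℂ) + θ * Complex.I)) :=
  dehn_twist_pairing_general ℓ hℓ f hf hper ξ hsupp' hξint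
end

section
/- For every ℓ > 0 and every s with |s| ≤ X(ℓ) one has ρ_ℓ(s) ≥ 1/( π + X(ℓ) − |s| ). In particular, for every Λ > 0 the conformal factor satisfies ρ_ℓ(s) ≥ 1/(π + Λ) at all points with X(ℓ) − Λ ≤ |s| ≤ X(ℓ), i.e. ρ_ℓ is bounded below, uniformly in ℓ, at bounded coordinate distance from the ends of the collar. -/
open Real

lemma gudermann_le (x : ℝ) (hx : 0 ≤ x) : Real.arctan (Real.sinh x) ≤ x := by
  have hderiv : ∀ y : ℝ, HasDerivAt (fun z => z - Real.arctan (Real.sinh z))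
      (1 - 1 / (1 + Real.sinh y ^ 2) * Real.cosh y) y := by
    intro y
    exact (hasDerivAt_id y).sub
      ((Real.hasDerivAt_arctan (Real.sinh y)).comp y (Real.hasDerivAt_sinh y))
  have hmono : Monotone (fun z => z - Real.arctan (Real.sinh z)) := by
    apply monotone_of_deriv_nonneg
    · exact fun y => (hderiv y).differentiableAt
    · intro y
      rw [(hderiv y).deriv]
      have h1 : (1 : ℝ) + Real.sinh y ^ 2 = Real.cosh y ^ 2 := by
        rw [Real.cosh_sq]; ring
      rw [h1]
      have hc : 1 ≤ Real.cosh y := Real.one_le_cosh y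
      have hc0 : 0 < Real.cosh y := lt_of_lt_of_le one_pos hc
      have h2 : 1 / Real.cosh y ^ 2 * Real.cosh y = 1 / Real.cosh y := by
        field_simp
      rw [h2]
      have h3 : 1 / Real.cosh y ≤ 1 := by
        rw [div_le_one hc0]; exact hc
      linarith
  have h0 := hmono hx
  simp only [Real.sinh_zero, Real.arctan_zero, sub_zero] at h0
  linarith

/-- Lower bound for the conformal factor: `ρ_ℓ(s) ≥ 1/(π + X(ℓ) − |s|)` for `|s| ≤ X(ℓ)`;
in particular `ρ_ℓ(s) ≥ 1/(π + Λ)` at bounded coordinate distance `Λ` from the ends of the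
collar, uniformly in `ℓ`. -/
theorem collarRho_lower_bound (ℓ : ℝ) (hℓ : 0 < ℓ) :
    (∀ s : ℝ, |s| ≤ collarX ℓ → 1 / (Real.pi + collarX ℓ - |s|) ≤ collarRho ℓ s) ∧
    ∀ Λ : ℝ, 0 < Λ → ∀ s : ℝ, collarX ℓ - Λ ≤ |s| → |s| ≤ collarX ℓ →
      1 / (Real.pi + Λ) ≤ collarRho ℓ s := by
  have hπ : (0 : ℝ) < Real.pi := Real.pi_pos
  have hA : Real.arctan (Real.sinh (ℓ / 2)) < Real.pi / 2 := Real.arctan_lt_pi_div_two _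
  have hA0 : 0 < Real.arctan (Real.sinh (ℓ / 2)) := by
    rw [← Real.arctan_zero]
    exact Real.arctan_strictMono (Real.sinh_pos_iff.mpr (by linarith))
  have hmain : ∀ s : ℝ, |s| ≤ collarX ℓ → 1 / (Real.pi + collarX ℓ - |s|) ≤ collarRho ℓ s := by
    intro s hs
    set A := Real.arctan (Real.sinh (ℓ / 2)) with hAdef
    set t := ℓ * |s| / (2 * Real.pi) with htdef
    have ht0 : 0 ≤ t := by positivity
    have htle : t ≤ Real.pi / 2 - A := by
      have : ℓ * |s| ≤ ℓ * collarX ℓ := by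
        exact mul_le_mul_of_nonneg_left hs hℓ.le
      have hXeq : ℓ * collarX ℓ = 2 * Real.pi * (Real.pi / 2 - A) := by
        unfold collarX; rw [← hAdef]; field_simp
      rw [htdef, div_le_iff₀ (by positivity)]
      calc ℓ * |s| ≤ ℓ * collarX ℓ := this
        _ = (Real.pi / 2 - A) * (2 * Real.pi) := by rw [hXeq]; ring
    have htlt : t < Real.pi / 2 := by linarith
    have hcos : Real.cos (ℓ * s / (2 * Real.pi)) = Real.cos t := by
      rcases abs_cases s with ⟨h, _⟩ | ⟨h, _⟩
      · rw [htdef, h]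
      · rw [htdef, h]
        rw [show ℓ * -s / (2 * Real.pi) = -(ℓ * s / (2 * Real.pi)) by ring, Real.cos_neg]
    have hcospos : 0 < Real.cos t := Real.cos_pos_of_mem_Ioo ⟨by linarith, htlt⟩
    have hXs : 0 ≤ collarX ℓ - |s| := by linarith [hs]
    have hD : 0 < Real.pi + collarX ℓ - |s| := by linarith
    -- key inequality: 2π cos t ≤ ℓ (π + X − |s|)
    have hkey : 2 * Real.pi * Real.cos t ≤ ℓ * (Real.pi + collarX ℓ - |s|) := by
      have hsin : Real.cos t ≤ Real.pi / 2 - t := by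
        have := Real.sin_le (by linarith : 0 ≤ Real.pi / 2 - t)
        rwa [Real.sin_pi_div_two_sub] at this
      have hgd : A ≤ ℓ / 2 := gudermann_le (ℓ / 2) (by linarith)
      have hXval : ℓ * collarX ℓ = 2 * Real.pi * (Real.pi / 2 - A) := by
        unfold collarX; rw [← hAdef]; field_simp
      have hst : ℓ * |s| = 2 * Real.pi * t := by
        rw [htdef]; field_simp
      have : ℓ * (Real.pi + collarX ℓ - |s|)
          = ℓ * Real.pi + 2 * Real.pi * (Real.pi / 2 - A) - 2 * Real.pi * t := by
        rw [mul_sub, mul_add, hXval, hst]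
      rw [this]
      nlinarith [hπ, hgd, hsin]
    rw [collarRho, hcos, div_le_div_iff₀ hD (by positivity)]
    linarith [hkey]
  refine ⟨hmain, ?_⟩
  intro Λ hΛ s hsl hsu
  have h1 := hmain s hsu
  have hD : 0 < Real.pi + collarX ℓ - |s| := by linarith
  have h2 : 1 / (Real.pi + Λ) ≤ 1 / (Real.pi + collarX ℓ - |s|) := by
    apply one_div_le_one_div_of_le hD
    linarith
  linarith
end
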